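/- Let X be a nonempty set of probability vectors in ℝⁿ. Define s_0 = 0 and s_k = inf_{p∈X} Σ_{i=1}^k p_i^↓ for k = 1,…,n, and set c_k = s_k − s_{k−1}. Then: (i) c_1 ≥ c_2 ≥ … ≥ c_n ≥ 0 and Σ_k c_k = 1, so c is a probability vector already in descending order; (ii) c ≺ p for every p ∈ X; (iii) for every probability vector c̃ with c̃ ≺ p for all p ∈ X, one has c̃ ≺ c. Hence c is the majorization meet ⋀_{p∈X} p of X. -/
import Mathlib


open Matrix Finset ComplexOrder

/-- The vector `x` sorted in descending order. -/
noncomputable def sortDesc {n : ℕ} (x : Fin n → ℝ) : Fin n → ℝ :=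
  fun i => x (Tuple.sort x i.rev)

/-- The sum of the `k` largest entries of `x`. -/
noncomputable def topSum {n : ℕ} (x : Fin n → ℝ) (k : ℕ) : ℝ :=
  ∑ i ∈ Finset.univ.filter (fun i : Fin n => (i : ℕ) < k), sortDesc x i

/-- `Maj b a` means `b ≺ a`, i.e. `a` majorizes `b`. -/
def Maj {n : ℕ} (b a : Fin n → ℝ) : Prop := ∀ k : ℕ, topSum b k ≤ topSum a k

/-- `p` is a probability vector. -/
def IsProbVec {n : ℕ} (p : Fin n → ℝ) : Prop := (∀ i, 0 ≤ p i) ∧ ∑ i, p i = 1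

/-- Shannon entropy (base 2). -/
noncomputable def shannon {ι : Type*} [Fintype ι] (p : ι → ℝ) : ℝ :=
  -∑ i, p i * Real.logb 2 (p i)

/-- A von Neumann measurement: an orthonormal basis of `ℂⁿ`. -/
def IsONB {n : ℕ} (ψ : Fin n → (Fin n → ℂ)) : Prop :=
  ∀ i j, star (ψ i) ⬝ᵥ ψ j = if i = j then 1 else 0

/-- Outcome distribution of the measurement `ψ` on the state `ρ`. -/
noncomputable def outcome {n : ℕ} (ρ : Matrix (Fin n) (Fin n) ℂ)
    (ψ : Fin n → (Fin n → ℂ)) : Fin n → ℝ :=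
  fun i => (star (ψ i) ⬝ᵥ (ρ *ᵥ ψ i)).re

/-- Vector of diagonal entries of `ρ` (real parts). -/
noncomputable def diagVec {n : ℕ} (ρ : Matrix (Fin n) (Fin n) ℂ) : Fin n → ℝ :=
  fun i => (ρ i i).re

/-- `c` is the majorization join of `a` and `b`. -/
def IsMajJoin {n : ℕ} (a b c : Fin n → ℝ) : Prop :=
  IsProbVec c ∧ Maj a c ∧ Maj b c ∧
    ∀ c', IsProbVec c' → Maj a c' → Maj b c' → Maj c c'

/-- `c` is the majorization meet of the set `X`. -/
def IsMajMeet {n : ℕ} (X : Set (Fin n → ℝ)) (c : Fin n → ℝ) : Prop :=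
  IsProbVec c ∧ (∀ p ∈ X, Maj c p) ∧
    ∀ c', IsProbVec c' → (∀ p ∈ X, Maj c' p) → Maj c' c


lemma sortDesc_anti {n : ℕ} (x : Fin n → ℝ) : Antitone (sortDesc x) := by
  intro i j hij
  exact Tuple.monotone_sort x (Fin.rev_le_rev.mpr hij)

lemma sortDesc_nonneg {n : ℕ} {x : Fin n → ℝ} (hx : ∀ i, 0 ≤ x i) (i : Fin n) :
    0 ≤ sortDesc x i := hx _

lemma sum_sortDesc {n : ℕ} (x : Fin n → ℝ) : ∑ i, sortDesc x i = ∑ i, x i :=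
  Equiv.sum_comp ((Fin.revPerm).trans (Tuple.sort x)) x

lemma topSum_zero {n : ℕ} (x : Fin n → ℝ) : topSum x 0 = 0 := by simp [topSum]

lemma topSum_succ {n : ℕ} (x : Fin n → ℝ) (k : ℕ) (hk : k < n) :
    topSum x (k + 1) = topSum x k + sortDesc x ⟨k, hk⟩ := by
  have : (Finset.univ.filter (fun i : Fin n => (i : ℕ) < k + 1))
      = insert ⟨k, hk⟩ (Finset.univ.filter (fun i : Fin n => (i : ℕ) < k)) := by
    ext i
    simp only [mem_filter, mem_univ, true_and, mem_insert, Nat.lt_succ_iff_lt_or_eq]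
    constructor
    · rintro (h | h)
      · exact Or.inr h
      · exact Or.inl (by ext; exact h)
    · rintro (h | h)
      · exact Or.inr (by rw [h])
      · exact Or.inl h
  rw [topSum, this, Finset.sum_insert (by simp), ← topSum, add_comm]

lemma topSum_of_ge {n : ℕ} (x : Fin n → ℝ) {k : ℕ} (hk : n ≤ k) :
    topSum x k = ∑ i, x i := by
  rw [topSum, Finset.filter_true_of_mem (fun i _ => lt_of_lt_of_le i.isLt hk), sum_sortDesc]

lemma topSum_nonneg {n : ℕ} {x : Fin n → ℝ} (hx : ∀ i, 0 ≤ x i) (k : ℕ) :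
    0 ≤ topSum x k :=
  Finset.sum_nonneg fun i _ => sortDesc_nonneg hx i

lemma topSum_mono {n : ℕ} {x : Fin n → ℝ} (hx : ∀ i, 0 ≤ x i) : Monotone (topSum x) := by
  intro k l hkl
  apply Finset.sum_le_sum_of_subset_of_nonneg
  · intro i hi
    simp only [mem_filter, mem_univ, true_and] at hi ⊢
    omega
  · exact fun i _ _ => sortDesc_nonneg hx i

lemma sortDesc_eq_self {n : ℕ} {c : Fin n → ℝ} (hc : ∀ i j : Fin n, i ≤ j → c j ≤ c i) :
    sortDesc c = c := by
  have hm : Monotone (c ∘ (Fin.revPerm : Equiv.Perm (Fin n))) := by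
    intro i j hij
    exact hc _ _ (Fin.rev_le_rev.mpr hij)
  have h := Tuple.comp_sort_eq_comp_iff_monotone.mpr hm
  funext i
  have := congrFun h i.rev
  simpa [sortDesc, Function.comp, Fin.rev_rev] using this.symm


/-- The vector `c` built from the infima of the partial sums of the
`k` largest entries over a nonempty set `X` of probability vectors is a descending
probability vector and is the majorization meet of `X`. -/
theorem stmt2 {n : ℕ} (X : Set (Fin n → ℝ)) (hX : X.Nonempty)
    (hXp : ∀ p ∈ X, IsProbVec p)
    (s : ℕ → ℝ) (hs0 : s 0 = 0)
    (hsk : ∀ k : ℕ, 1 ≤ k → k ≤ n → s k = sInf ((fun p => topSum p k) '' X))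
    (c : Fin n → ℝ) (hc : ∀ i : Fin n, c i = s ((i : ℕ) + 1) - s (i : ℕ)) :
    (∀ i j : Fin n, i ≤ j → c j ≤ c i) ∧ (∀ i, 0 ≤ c i) ∧ (∑ i, c i) = 1 ∧
    (∀ p ∈ X, Maj c p) ∧
    (∀ c', IsProbVec c' → (∀ p ∈ X, Maj c' p) → Maj c' c) ∧
    IsMajMeet X c := by
  obtain ⟨q, hq⟩ := hX
  -- n = 0 is impossible
  rcases Nat.eq_zero_or_pos n with hn | hn
  · exfalso
    have := (hXp q hq).2
    subst hn
    simpa using this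
  -- basic facts about members of X
  have hXsum : ∀ p ∈ X, ∀ k : ℕ, n ≤ k → topSum p k = 1 := by
    intro p hp k hk
    rw [topSum_of_ge p hk, (hXp p hp).2]
  have hXle1 : ∀ p ∈ X, ∀ k : ℕ, topSum p k ≤ 1 := by
    intro p hp k
    rcases le_or_gt n k with h | h
    · exact le_of_eq (hXsum p hp k h)
    · calc topSum p k ≤ topSum p n := topSum_mono (hXp p hp).1 h.le
        _ = 1 := hXsum p hp n le_rfl
  -- s k is a lower bound / greatest lower bound
  have hbdd : ∀ k : ℕ, BddBelow ((fun p => topSum p k) '' X) := by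
    intro k
    refine ⟨0, ?_⟩
    rintro r ⟨p, hp, rfl⟩
    exact topSum_nonneg (hXp p hp).1 k
  have hsle : ∀ k : ℕ, k ≤ n → ∀ p ∈ X, s k ≤ topSum p k := by
    intro k hk p hp
    rcases Nat.eq_zero_or_pos k with rfl | hk1
    · rw [hs0]
      exact topSum_nonneg (hXp p hp).1 0
    · rw [hsk k hk1 hk]
      exact csInf_le (hbdd k) ⟨p, hp, rfl⟩
  have hsge : ∀ k : ℕ, k ≤ n → ∀ r : ℝ, (∀ p ∈ X, r ≤ topSum p k) → r ≤ s k := by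
    intro k hk r hr
    rcases Nat.eq_zero_or_pos k with rfl | hk1
    · rw [hs0]
      have := hr q hq
      rwa [topSum_zero] at this
    · rw [hsk k hk1 hk]
      exact le_csInf ⟨_, ⟨q, hq, rfl⟩⟩ (by rintro r' ⟨p, hp, rfl⟩; exact hr p hp)
  have hsn : s n = 1 := by
    refine le_antisymm ?_ (hsge n le_rfl 1 (fun p hp => (hXsum p hp n le_rfl).ge))
    calc s n ≤ topSum q n := hsle n le_rfl q hq
      _ ≤ 1 := hXle1 q hq n
  have hsle1 : ∀ k : ℕ, k ≤ n → s k ≤ 1 := by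
    intro k hk
    calc s k ≤ topSum q k := hsle k hk q hq
      _ ≤ 1 := hXle1 q hq k
  -- concavity: adjacent differences decrease
  have hconc : ∀ k : ℕ, k + 2 ≤ n → s (k + 2) - s (k + 1) ≤ s (k + 1) - s k := by
    intro k hk2
    have hk1 : k + 1 ≤ n := by omega
    have hkn : k < n := by omega
    have hk1n : k + 1 < n := by omega
    have key : (s k + s (k + 2)) / 2 ≤ s (k + 1) := by
      apply hsge (k + 1) hk1
      intro p hp
      have h1 := topSum_succ p k hkn
      have h2 := topSum_succ p (k + 1) hk1n
      have h3 : sortDesc p ⟨k + 1, hk1n⟩ ≤ sortDesc p ⟨k, hkn⟩ :=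
        sortDesc_anti p (by simp [Fin.le_def])
      have h4 := hsle k (by omega) p hp
      have h5 := hsle (k + 2) hk2 p hp
      linarith
    linarith
  -- c is descending
  have hdesc : ∀ i j : Fin n, i ≤ j → c j ≤ c i := by
    have step : ∀ j : ℕ, ∀ hj : j < n, ∀ i : ℕ, ∀ hi : i < n, i ≤ j →
        c ⟨j, hj⟩ ≤ c ⟨i, hi⟩ := by
      intro j
      induction j with
      | zero =>
        intro hj i hi hij
        have : i = 0 := Nat.le_zero.mp hij
        subst this
        exact le_rfl
      | succ m ih =>
        intro hj i hi hij
        rcases Nat.lt_succ_iff_lt_or_eq.mp (Nat.lt_succ_of_le hij) with h | h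
        · calc c ⟨m + 1, hj⟩ ≤ c ⟨m, by omega⟩ := by
                rw [hc, hc]
                exact hconc m (by omega)
            _ ≤ c ⟨i, hi⟩ := ih (by omega) i hi (by omega)
        · subst h; exact le_rfl
    intro i j hij
    exact step j j.isLt i i.isLt hij
  -- nonnegativity
  have hnonneg : ∀ i, 0 ≤ c i := by
    intro i
    have hlast : (0 : ℝ) ≤ c ⟨n - 1, by omega⟩ := by
      rw [hc]
      simp only
      have h1 : n - 1 + 1 = n := by omega
      rw [h1, hsn]
      have := hsle1 (n - 1) (by omega)
      linarith
    calc (0 : ℝ) ≤ c ⟨n - 1, by omega⟩ := hlast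
      _ ≤ c i := hdesc i ⟨n - 1, by omega⟩ (by simp [Fin.le_def]; omega)
  -- sum = 1
  have hsum : ∑ i, c i = 1 := by
    have h1 : ∑ i : Fin n, c i = ∑ i : Fin n, (s ((i : ℕ) + 1) - s (i : ℕ)) :=
      Finset.sum_congr rfl fun i _ => hc i
    rw [h1, Fin.sum_univ_eq_sum_range (fun k => s (k + 1) - s k) n,
      Finset.sum_range_sub, hs0, hsn, sub_zero]
  have hsd : sortDesc c = c := sortDesc_eq_self hdesc
  -- topSum c k = s k for k ≤ n
  have htopc : ∀ k : ℕ, k ≤ n → topSum c k = s k := by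
    intro k
    induction k with
    | zero => intro _; rw [topSum_zero, hs0]
    | succ m ih =>
      intro hm
      have hmn : m < n := by omega
      rw [topSum_succ c m hmn, hsd, ih (by omega), hc]
      simp
  have htopc' : ∀ k : ℕ, n ≤ k → topSum c k = 1 := by
    intro k hk
    rw [topSum_of_ge c hk, hsum]
  -- Maj c p
  have hmaj : ∀ p ∈ X, Maj c p := by
    intro p hp k
    rcases le_or_gt k n with h | h
    · rw [htopc k h]
      exact hsle k h p hp
    · rw [htopc' k h.le, hXsum p hp k h.le]
  -- greatest lower bound
  have hglb : ∀ c', IsProbVec c' → (∀ p ∈ X, Maj c' p) → Maj c' c := by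
    intro c' hc' hMaj k
    rcases le_or_gt k n with h | h
    · rw [htopc k h]
      exact hsge k h _ (fun p hp => hMaj p hp k)
    · rw [htopc' k h.le, topSum_of_ge c' h.le, hc'.2]
  exact ⟨hdesc, hnonneg, hsum, hmaj, hglb, ⟨hnonneg, hsum⟩, hmaj, hglb⟩
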